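/- Let q be a self-join-free Boolean conjunctive query whose attack graph contains a strong cycle. Then the attack graph of q contains a strong cycle of length two. -/

import Mathlib

/-- A fact `R(a₁,…,aₙ)`: relation name, primary-key values, non-key values. -/
structure DBFact where
  rel : ℕ
  key : List ℕ
  rest : List ℕ
deriving DecidableEq

/-- Two facts are key-equal if they have the same relation name and primary-key value. -/
def keyEq (A B : DBFact) : Prop := A.rel = B.rel ∧ A.key = B.key

instance (A B : DBFact) : Decidable (keyEq A B) :=
  inferInstanceAs (Decidable (_ ∧ _))

/-- A set of facts is consistent if it contains no two distinct key-equal facts. -/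
def Consistent (s : Finset DBFact) : Prop := ∀ A ∈ s, ∀ B ∈ s, keyEq A B → A = B

/-- A repair of `db` is a maximal (w.r.t. ⊆) consistent subset of `db`. -/
def Repair (db r : Finset DBFact) : Prop :=
  r ⊆ db ∧ Consistent r ∧ ∀ r', r' ⊆ db → Consistent r' → r ⊆ r' → r = r'

/-- A term is a variable (inl) or a constant (inr). -/
abbrev Term := ℕ ⊕ ℕ

/-- An atom `R(t₁,…,tₙ)` with key positions and non-key positions. -/
structure Atom where
  rel : ℕ
  key : List Term
  rest : List Term
deriving DecidableEq

def termVars (l : List Term) : Finset ℕ := (l.filterMap fun t => t.getLeft?).toFinset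

/-- Variables at primary-key positions of an atom. -/
def keyVars (F : Atom) : Finset ℕ := termVars F.key

/-- All variables of an atom. -/
def atomVars (F : Atom) : Finset ℕ := termVars F.key ∪ termVars F.rest

/-- A query (finite set of atoms) is self-join-free: no relation name occurs twice. -/
def SJF (q : Finset Atom) : Prop := ∀ F ∈ q, ∀ G ∈ q, F.rel = G.rel → F = G

/-- Apply a valuation (total map from variables to constants) to an atom, yielding a fact. -/
def applyVal (θ : ℕ → ℕ) (F : Atom) : DBFact :=
  ⟨F.rel, F.key.map (Sum.elim θ id), F.rest.map (Sum.elim θ id)⟩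

/-- Semantic implication of a functional dependency `X → Y` by a set of FDs
(two-tuple semantics, which is equivalent to the standard one for FDs). -/
def FDImplies (fds : Set (Set ℕ × Set ℕ)) (X Y : Set ℕ) : Prop :=
  ∀ θ μ : ℕ → ℕ,
    (∀ p ∈ fds, (∀ v ∈ p.1, θ v = μ v) → ∀ v ∈ p.2, θ v = μ v) →
    (∀ v ∈ X, θ v = μ v) → ∀ v ∈ Y, θ v = μ v

/-- `FD(q) = { key(F) → vars(F) : F ∈ q }`. -/
def FDs (q : Finset Atom) : Set (Set ℕ × Set ℕ) :=
  {p | ∃ F ∈ q, p = ((keyVars F : Set ℕ), (atomVars F : Set ℕ))}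

/-- `F⁺ = { x : FD(q \ {F}) ⊨ key(F) → x }`. -/
def plus (q : Finset Atom) (F : Atom) : Set ℕ :=
  {x | FDImplies (FDs (q.erase F)) (keyVars F : Set ℕ) {x}}

/-- One step of a witness for an attack by `F`: consecutive atoms share a variable outside `F⁺`. -/
def AttackStep (q : Finset Atom) (F : Atom) (A B : Atom) : Prop :=
  ¬ ((atomVars A ∩ atomVars B : Finset ℕ) : Set ℕ) ⊆ plus q F

/-- `F` attacks `G` in the attack graph of `q`. -/
def Attacks (q : Finset Atom) (F G : Atom) : Prop :=
  F ≠ G ∧ F ∈ q ∧ ∃ L : List Atom, (∀ A ∈ L, A ∈ q) ∧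
    List.Chain (AttackStep q F) F L ∧ (F :: L).getLast (List.cons_ne_nil F L) = G

/-- `F` attacks the variable `z`. -/
def AttacksVar (q : Finset Atom) (F : Atom) (z : ℕ) : Prop :=
  z ∉ plus q F ∧ F ∈ q ∧ ∃ L : List Atom, (∀ A ∈ L, A ∈ q) ∧
    List.Chain (AttackStep q F) F L ∧ z ∈ atomVars ((F :: L).getLast (List.cons_ne_nil F L))

/-- `r ⊨ ζ(q)` for a valuation `ζ` over the variable set `X`. -/
def Sat (r : Finset DBFact) (q : Finset Atom) (X : Finset ℕ) (ζ : ℕ → ℕ) : Prop :=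
  ∃ θ : ℕ → ℕ, (∀ v ∈ X, θ v = ζ v) ∧ ∀ F ∈ q, applyVal θ F ∈ r

/-- `r ⊨ q`. -/
def Sat0 (r : Finset DBFact) (q : Finset Atom) : Prop :=
  ∃ θ : ℕ → ℕ, ∀ F ∈ q, applyVal θ F ∈ r

/-- A fact `A` is relevant for `q` in `r` if `A ∈ θ(q) ⊆ r` for some valuation `θ`. -/
def Relevant (A : DBFact) (q : Finset Atom) (r : Finset DBFact) : Prop :=
  ∃ θ : ℕ → ℕ, (∃ F ∈ q, applyVal θ F = A) ∧ ∀ F ∈ q, applyVal θ F ∈ r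

/-- An attack `F → G` is strong if `FD(q) ⊭ key(F) → key(G)`. -/
def StrongAttack (q : Finset Atom) (F G : Atom) : Prop :=
  Attacks q F G ∧ ¬ FDImplies (FDs q) (keyVars F : Set ℕ) (keyVars G : Set ℕ)

/-!
If `F` attacks `G` and `G` attacks `H`, then `F` attacks `H` or `G` attacks `F`. Indeed, follow a
witness for `G → H`: as long as its steps share variables outside `F⁺` they prolong a witness for
`F → G`; at the first step that does not, `G` attacks a variable of `F⁺`, and then `G` attacks `F`,
because the variables of `F⁺` that `G` does not attack contain `key(F)` and are closed under
`FD(q \ {F})`.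

Now let `P₀ → P₁ → ⋯ → Pₘ → P₀` be a cycle whose attack `Pₘ → P₀` is strong, and apply this to
`P₀ → P₁ → P₂` and to `Pₘ → P₀ → P₁`. Either `P₀ ⇄ P₁` or `Pₘ ⇄ P₀` is a strong cycle of length
two, or dropping `P₁` (resp. `P₀`) leaves a shorter cycle with a strong attack: in the second case
`P₁ → P₀` is weak, so `key(P₁) → key(P₀)` and `Pₘ → P₁` is strong.
-/

theorem FDImplies.trans {fds : Set (Set ℕ × Set ℕ)} {X Y Z : Set ℕ} (hXY : FDImplies fds X Y)
    (hYZ : FDImplies fds Y Z) : FDImplies fds X Z :=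
  fun θ μ hfds hX => hYZ θ μ hfds (hXY θ μ hfds hX)

theorem FDImplies.subset_of_closed {fds : Set (Set ℕ × Set ℕ)} {X Y T : Set ℕ}
    (h : FDImplies fds X Y) (hX : X ⊆ T) (hT : ∀ p ∈ fds, p.1 ⊆ T → p.2 ⊆ T) : Y ⊆ T := by
  classical
  -- a pair of valuations that agree exactly on `T`
  let μ : ℕ → ℕ := fun v => if v ∈ T then 0 else 1
  have hμ : ∀ v, 0 = μ v ↔ v ∈ T := fun v => by by_cases hv : v ∈ T <;> simp [μ, hv]
  intro v hv
  refine (hμ v).1 (h (fun _ => 0) μ (fun p hp hp1 w hw => ?_) (fun w hw => (hμ w).2 (hX hw)) v hv)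
  exact (hμ w).2 (hT p hp (fun u hu => (hμ u).1 (hp1 u hu)) hw)

theorem keyVars_subset_atomVars (F : Atom) : keyVars F ⊆ atomVars F :=
  Finset.subset_union_left

theorem keyVars_subset_plus (q : Finset Atom) (F : Atom) : (keyVars F : Set ℕ) ⊆ plus q F :=
  fun v hv _ _ _ hX _ hw => hw ▸ hX v hv

theorem atomVars_subset_plus {q : Finset Atom} {F E : Atom} (hE : E ∈ q) (hEF : E ≠ F)
    (h : (keyVars E : Set ℕ) ⊆ plus q F) : (atomVars E : Set ℕ) ⊆ plus q F :=
  fun v hv θ μ hfd hX _ hw => hw ▸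
    hfd _ ⟨E, Finset.mem_erase.2 ⟨hEF, hE⟩, rfl⟩ (fun u hu => h hu θ μ hfd hX u rfl) v hv

theorem plus_subset_of_closed {q : Finset Atom} {F : Atom} {T : Set ℕ}
    (hF : (keyVars F : Set ℕ) ⊆ T)
    (hT : ∀ E ∈ q, E ≠ F → (keyVars E : Set ℕ) ⊆ T → (atomVars E : Set ℕ) ⊆ T) :
    plus q F ⊆ T := by
  intro x hx
  refine FDImplies.subset_of_closed hx hF ?_ rfl
  rintro _ ⟨E, hE, rfl⟩
  exact hT E (Finset.mem_of_mem_erase hE) (Finset.ne_of_mem_erase hE)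

theorem attackStep_iff {q : Finset Atom} {F A B : Atom} :
    AttackStep q F A B ↔ ∃ z ∈ atomVars A, z ∈ atomVars B ∧ z ∉ plus q F := by
  simp [AttackStep, Set.not_subset, and_assoc]

theorem List.isChain_cons_and_iff {α : Type*} {p : α → Prop} {R : α → α → Prop} {a : α}
    {l : List α} :
    IsChain (fun x y => p y ∧ R x y) (a :: l) ↔ (∀ b ∈ l, p b) ∧ IsChain R (a :: l) := by
  induction l generalizing a with
  | nil => simp
  | cons b l ih =>
    simp only [isChain_cons_cons, ih, forall_mem_cons]
    tauto

def Reaches (q : Finset Atom) (F : Atom) : Atom → Prop :=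
  Relation.ReflTransGen (fun A B => B ∈ q ∧ AttackStep q F A B) F

theorem exists_chain_iff_reaches {q : Finset Atom} {F : Atom} {P : Atom → Prop} :
    (∃ L : List Atom, (∀ A ∈ L, A ∈ q) ∧ List.IsChain (AttackStep q F) (F :: L) ∧
      P ((F :: L).getLast (List.cons_ne_nil F L))) ↔ ∃ E, Reaches q F E ∧ P E := by
  constructor
  · rintro ⟨L, hLq, hL, hP⟩
    exact ⟨_, List.relationReflTransGen_of_exists_isChain_cons L
      (List.isChain_cons_and_iff.2 ⟨hLq, hL⟩) rfl, hP⟩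
  · rintro ⟨E, hE, hP⟩
    obtain ⟨L, hL, rfl⟩ := List.exists_isChain_cons_of_relationReflTransGen hE
    exact ⟨L, (List.isChain_cons_and_iff.1 hL).1, (List.isChain_cons_and_iff.1 hL).2, hP⟩

theorem attacks_iff {q : Finset Atom} {F G : Atom} :
    Attacks q F G ↔ F ≠ G ∧ F ∈ q ∧ Reaches q F G :=
  and_congr_right' <| and_congr_right' <|
    (exists_chain_iff_reaches (P := (· = G))).trans exists_eq_right

theorem attacksVar_iff {q : Finset Atom} {F : Atom} {z : ℕ} :
    AttacksVar q F z ↔ z ∉ plus q F ∧ F ∈ q ∧ ∃ E, Reaches q F E ∧ z ∈ atomVars E :=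
  and_congr_right' <| and_congr_right' <| exists_chain_iff_reaches (P := (z ∈ atomVars ·))

theorem Reaches.step {q : Finset Atom} {F A B : Atom} {z : ℕ} (h : Reaches q F A) (hB : B ∈ q)
    (hzA : z ∈ atomVars A) (hzB : z ∈ atomVars B) (hzF : z ∉ plus q F) : Reaches q F B :=
  h.tail ⟨hB, attackStep_iff.2 ⟨z, hzA, hzB, hzF⟩⟩

theorem AttacksVar.attacks {q : Finset Atom} {G F : Atom} {v : ℕ} (h : AttacksVar q G v)
    (hF : F ∈ q) (hvF : v ∈ atomVars F) (hne : G ≠ F) : Attacks q G F := by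
  obtain ⟨hvG, hG, E, hE, hvE⟩ := attacksVar_iff.1 h
  exact attacks_iff.2 ⟨hne, hG, hE.step hF hvE hvF hvG⟩

theorem AttacksVar.of_mem {q : Finset Atom} {G E : Atom} {v u : ℕ} (h : AttacksVar q G v)
    (hE : E ∈ q) (hvE : v ∈ atomVars E) (huE : u ∈ atomVars E) (huG : u ∉ plus q G) :
    AttacksVar q G u := by
  obtain ⟨hvG, hG, E', hE', hvE'⟩ := attacksVar_iff.1 h
  exact attacksVar_iff.2 ⟨huG, hG, E, hE'.step hE hvE' hvE hvG, huE⟩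

theorem not_attacks_of_keyVars_subset_plus {q : Finset Atom} {F G : Atom}
    (h : (keyVars G : Set ℕ) ⊆ plus q F) : ¬ Attacks q F G := by
  intro hFG
  obtain ⟨hne, -, hreach⟩ := attacks_iff.1 hFG
  rcases hreach.cases_tail with rfl | ⟨A, -, hG, hstep⟩
  · exact hne rfl
  obtain ⟨z, -, hzG, hzF⟩ := attackStep_iff.1 hstep
  exact hzF (atomVars_subset_plus hG hne.symm h hzG)

theorem Attacks.attacks_of_attacksVar_mem_plus {q : Finset Atom} {F G : Atom} {z : ℕ}
    (hFG : Attacks q F G) (hz : AttacksVar q G z) (hzF : z ∈ plus q F) : Attacks q G F := by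
  by_contra hGF
  -- the variables of `F⁺` not attacked by `G` contain `key(F)` and are closed under `FD(q \ {F})`
  suffices plus q F ⊆ {v | v ∈ plus q F ∧ ¬ AttacksVar q G v} from (this hzF).2 hz
  refine plus_subset_of_closed (fun v hv => ⟨keyVars_subset_plus q F hv, fun hvG => ?_⟩) ?_
  · exact hGF (hvG.attacks hFG.2.1 (keyVars_subset_atomVars F hv) hFG.1.symm)
  intro E hE hEF hkey v hv
  refine ⟨atomVars_subset_plus hE hEF (fun u hu => (hkey hu).1) hv, fun hvG => ?_⟩
  obtain rfl | hEG := eq_or_ne E G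
  · exact not_attacks_of_keyVars_subset_plus (fun u hu => (hkey hu).1) hFG
  have hkeyG : (keyVars E : Set ℕ) ⊆ plus q G := fun u hu => by
    by_contra huG
    exact (hkey hu).2 (hvG.of_mem hE hv (keyVars_subset_atomVars E hu) huG)
  exact (attacksVar_iff.1 hvG).1 (atomVars_subset_plus hE hEG hkeyG hv)

theorem Attacks.trans_or {q : Finset Atom} {F G H : Atom} (hFG : Attacks q F G)
    (hGH : Attacks q G H) : Attacks q F H ∨ Attacks q G F := by
  obtain rfl | hFH := eq_or_ne F H
  · exact Or.inr hGH
  obtain ⟨-, hG, hGH⟩ := attacks_iff.1 hGH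
  suffices ∀ E, Reaches q G E → Reaches q F E ∨ Attacks q G F by
    exact (this H hGH).imp_left fun hFH' => attacks_iff.2 ⟨hFH, hFG.2.1, hFH'⟩
  intro E hE
  induction hE with
  | refl => exact Or.inl (attacks_iff.1 hFG).2.2
  | @tail A B hGA hAB ih =>
    refine ih.elim (fun hFA => ?_) Or.inr
    by_cases hstep : AttackStep q F A B
    · exact Or.inl (hFA.tail ⟨hAB.1, hstep⟩)
    obtain ⟨z, hzA, hzB, hzG⟩ := attackStep_iff.1 hAB.2
    have hzF : z ∈ plus q F := by
      by_contra hzF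
      exact hstep (attackStep_iff.2 ⟨z, hzA, hzB, hzF⟩)
    exact Or.inr (hFG.attacks_of_attacksVar_mem_plus
      (attacksVar_iff.2 ⟨hzG, hG, A, hGA, hzA⟩) hzF)

def HasStrongTwoCycle (q : Finset Atom) : Prop :=
  ∃ F G, F ≠ G ∧ Attacks q F G ∧ Attacks q G F ∧ (StrongAttack q F G ∨ StrongAttack q G F)

theorem HasStrongTwoCycle.of_strongAttack {q : Finset Atom} {F G : Atom}
    (hFG : StrongAttack q F G) (hGF : Attacks q G F) : HasStrongTwoCycle q :=
  ⟨F, G, hFG.1.1, hFG.1, hGF, Or.inl hFG⟩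

theorem hasStrongTwoCycle_of_closed_walk (q : Finset Atom) (m : ℕ) (P : ℕ → Atom)
    (hP : ∀ j < m, Attacks q (P j) (P (j + 1))) (hstrong : StrongAttack q (P m) (P 0)) :
    HasStrongTwoCycle q := by
  induction m using Nat.strong_induction_on generalizing P with
  | _ m ih =>
  match m with
  | 0 => exact absurd rfl hstrong.1.1
  | 1 => exact .of_strongAttack hstrong (hP 0 one_pos)
  | m + 2 =>
    rcases (hP 0 (by omega)).trans_or (hP 1 (by omega)) with h02 | h10
    · refine ih (m + 1) (by omega) (fun i => if i = 0 then P 0 else P (i + 1)) ?_ (by simpa)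
      rintro (_ | j) hj
      · simpa using h02
      · simpa using hP (j + 2) (by omega)
    by_cases hs10 : StrongAttack q (P 1) (P 0)
    · exact .of_strongAttack hs10 (hP 0 (by omega))
    have hkey10 : FDImplies (FDs q) (keyVars (P 1)) (keyVars (P 0)) := by
      by_contra h
      exact hs10 ⟨h10, h⟩
    rcases hstrong.1.trans_or (hP 0 (by omega)) with hm1 | h0m
    · exact ih (m + 1) (by omega) (fun i => P (i + 1)) (fun j hj => hP (j + 1) (by omega))
        ⟨hm1, fun h => hstrong.2 (h.trans hkey10)⟩
    · exact .of_strongAttack hstrong h0m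

theorem strong_cycle_implies_strong_two_cycle_general (q : Finset Atom)
    (h : ∃ (n : ℕ) (f : ZMod (n + 1) → Atom),
      (∀ i, Attacks q (f i) (f (i + 1))) ∧ ∃ i, StrongAttack q (f i) (f (i + 1))) :
    ∃ F G, F ≠ G ∧ Attacks q F G ∧ Attacks q G F ∧
      (StrongAttack q F G ∨ StrongAttack q G F) := by
  obtain ⟨n, f, hcycle, i, hstrong⟩ := h
  have hwrap : i + 1 + (n : ZMod (n + 1)) = i := by
    rw [add_assoc, add_comm 1, ← Nat.cast_add_one, ZMod.natCast_self, add_zero]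
  refine hasStrongTwoCycle_of_closed_walk q n (fun j => f (i + 1 + j)) (fun j _ => ?_) ?_
  · simpa [add_assoc] using hcycle (i + 1 + j)
  · simpa [hwrap] using hstrong

/-- If the attack graph of `q` contains a strong cycle, then it contains a strong
cycle of length two. -/
theorem strong_cycle_implies_strong_two_cycle (q : Finset Atom) (hq : SJF q)
    (h : ∃ (n : ℕ) (f : ZMod (n + 1) → Atom),
      (∀ i, Attacks q (f i) (f (i + 1))) ∧ ∃ i, StrongAttack q (f i) (f (i + 1))) :
    ∃ F G, F ≠ G ∧ Attacks q F G ∧ Attacks q G F ∧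
      (StrongAttack q F G ∨ StrongAttack q G F) :=
  strong_cycle_implies_strong_two_cycle_general q h
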